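/- Let b : X → ℝ, let χ₀, χ₁, …, χₘ₊₁ be differentiable at every point of s, each satisfying (L·)(x) + q(x)·(·)(x) = b(x) for all x ∈ s, with χ₁(x) ≠ χ₀(x) for all x ∈ s, and let f : ℝᵐ → ℝ be differentiable. Then the function χ(x) = χ₀(x) + (χ₁(x) − χ₀(x)) · f( (χ₂(x) − χ₀(x))/(χ₁(x) − χ₀(x)), …, (χₘ₊₁(x) − χ₀(x))/(χ₁(x) − χ₀(x)) ) satisfies (Lχ)(x) + q(x)·χ(x) = b(x) for all x ∈ s; that is, a solution of the totally linear equation can be built from m+2 particular solutions. -/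

import Mathlib

/-!
Differences of solutions of `Lψ + qψ = b` solve the homogeneous equation `Lψ + qψ = 0`, and
the quotient of two solutions of the same homogeneous equation is annihilated by `L`. Hence the
ratios `(χⱼ₊₂ - χ₀) / (χ₁ - χ₀)`, and with them `g = f(ratios)` by the chain rule, are first
integrals of `L`, and `χ₀ + (χ₁ - χ₀) g` is a particular solution plus a homogeneous one.
-/

open ContinuousLinearMap

section

variable {X : Type*} [NormedAddCommGroup X] [NormedSpace ℝ X] {x v : X}

theorem fderiv_fun_div_apply {φ ψ : X → ℝ} (hφ : DifferentiableAt ℝ φ x)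
    (hψ : DifferentiableAt ℝ ψ x) (hψx : ψ x ≠ 0) (v : X) :
    fderiv ℝ (fun y => φ y / ψ y) x v
      = (fderiv ℝ φ x v * ψ x - φ x * fderiv ℝ ψ x v) / ψ x ^ 2 := by
  have hinv : HasFDerivAt (fun y => (ψ y)⁻¹) ((-(ψ x ^ 2)⁻¹) • fderiv ℝ ψ x) x :=
    (hasDerivAt_inv hψx).comp_hasFDerivAt x hψ.hasFDerivAt
  simp only [div_eq_mul_inv]
  rw [(hφ.hasFDerivAt.fun_mul hinv).fderiv]
  simp only [add_apply, smul_apply, smul_eq_mul]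
  field_simp
  ring

variable {c β : ℝ}

theorem fderiv_sub_apply_add_mul_eq_zero {φ ψ : X → ℝ} (hφ : DifferentiableAt ℝ φ x)
    (hψ : DifferentiableAt ℝ ψ x) (hφeq : fderiv ℝ φ x v + c * φ x = β)
    (hψeq : fderiv ℝ ψ x v + c * ψ x = β) :
    fderiv ℝ (fun y => φ y - ψ y) x v + c * (φ x - ψ x) = 0 := by
  rw [fderiv_fun_sub hφ hψ, sub_apply]
  linarith

theorem fderiv_div_apply_eq_zero {φ ψ : X → ℝ} (hφ : DifferentiableAt ℝ φ x)
    (hψ : DifferentiableAt ℝ ψ x) (hψx : ψ x ≠ 0) (hφeq : fderiv ℝ φ x v + c * φ x = 0)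
    (hψeq : fderiv ℝ ψ x v + c * ψ x = 0) :
    fderiv ℝ (fun y => φ y / ψ y) x v = 0 := by
  rw [fderiv_fun_div_apply hφ hψ hψx, eq_neg_of_add_eq_zero_left hφeq,
    eq_neg_of_add_eq_zero_left hψeq]
  ring

theorem fderiv_comp_pi_apply_eq_zero {ι : Type*} [Fintype ι] {F : Type*} [NormedAddCommGroup F]
    [NormedSpace ℝ F] {f : (ι → ℝ) → F} {r : ι → X → ℝ}
    (hf : DifferentiableAt ℝ f (fun i => r i x)) (hr : ∀ i, DifferentiableAt ℝ (r i) x)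
    (hr₀ : ∀ i, fderiv ℝ (r i) x v = 0) :
    fderiv ℝ (fun y => f (fun i => r i y)) x v = 0 := by
  have hrv : fderiv ℝ (fun y i => r i y) x v = 0 := by
    ext i
    simpa [fderiv_pi hr] using hr₀ i
  rw [fderiv_fun_comp x hf (differentiableAt_pi.mpr hr), ContinuousLinearMap.comp_apply, hrv,
    map_zero]

theorem fderiv_add_mul_apply_add_mul_eq {χ₀ u g : X → ℝ} (hχ₀ : DifferentiableAt ℝ χ₀ x)
    (hu : DifferentiableAt ℝ u x) (hg : DifferentiableAt ℝ g x)
    (hχ₀eq : fderiv ℝ χ₀ x v + c * χ₀ x = β) (hueq : fderiv ℝ u x v + c * u x = 0)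
    (hg₀ : fderiv ℝ g x v = 0) :
    fderiv ℝ (fun y => χ₀ y + u y * g y) x v + c * (χ₀ x + u x * g x) = β := by
  rw [fderiv_fun_add hχ₀ (hu.fun_mul hg), fderiv_fun_mul hu hg]
  simp only [add_apply, smul_apply, smul_eq_mul, hg₀]
  linear_combination hχ₀eq + g x * hueq

end

theorem solution_from_particular_solutions_general
    {X : Type*} [NormedAddCommGroup X] [NormedSpace ℝ X]
    (s : Set X) (a : X → X) (q b : X → ℝ)
    (m : ℕ) (χ : Fin (m + 2) → X → ℝ)
    (hχd : ∀ j, ∀ x ∈ s, DifferentiableAt ℝ (χ j) x)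
    (hχeq : ∀ j, ∀ x ∈ s, fderiv ℝ (χ j) x (a x) + q x * χ j x = b x)
    (hne : ∀ x ∈ s, χ 1 x ≠ χ 0 x)
    (f : (Fin m → ℝ) → ℝ) (hf : Differentiable ℝ f) :
    ∀ x ∈ s,
      fderiv ℝ
          (fun y => χ 0 y + (χ 1 y - χ 0 y) *
            f (fun j => (χ j.succ.succ y - χ 0 y) / (χ 1 y - χ 0 y))) x (a x)
        + q x * (χ 0 x + (χ 1 x - χ 0 x) *
            f (fun j => (χ j.succ.succ x - χ 0 x) / (χ 1 x - χ 0 x))) = b x := by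
  intro x hx
  have hd (j : Fin (m + 2)) : DifferentiableAt ℝ (χ j) x := hχd j x hx
  have hdiff (j : Fin (m + 2)) : DifferentiableAt ℝ (fun y => χ j y - χ 0 y) x :=
    (hd j).sub (hd 0)
  have hhom (j : Fin (m + 2)) :
      fderiv ℝ (fun y => χ j y - χ 0 y) x (a x) + q x * (χ j x - χ 0 x) = 0 :=
    fderiv_sub_apply_add_mul_eq_zero (hd j) (hd 0) (hχeq j x hx) (hχeq 0 x hx)
  have hu : χ 1 x - χ 0 x ≠ 0 := sub_ne_zero.mpr (hne x hx)
  have hratio (j : Fin m) :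
      DifferentiableAt ℝ (fun y => (χ j.succ.succ y - χ 0 y) / (χ 1 y - χ 0 y)) x := by
    fun_prop (disch := exact hu)
  have hratio₀ (j : Fin m) :
      fderiv ℝ (fun y => (χ j.succ.succ y - χ 0 y) / (χ 1 y - χ 0 y)) x (a x) = 0 :=
    fderiv_div_apply_eq_zero (hdiff _) (hdiff 1) hu (hhom _) (hhom 1)
  exact fderiv_add_mul_apply_add_mul_eq (hd 0) (hdiff 1)
    ((hf _).comp x (differentiableAt_pi.mpr hratio)) (hχeq 0 x hx) (hhom 1)
    (fderiv_comp_pi_apply_eq_zero (hf _) hratio hratio₀)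

/-- A solution of the totally linear equation built from m+2 particular solutions:
χ = χ₀ + (χ₁ − χ₀)·f((χ₂ − χ₀)/(χ₁ − χ₀), …, (χₘ₊₁ − χ₀)/(χ₁ − χ₀))
solves (L+q)χ = b on s. -/
theorem solution_from_particular_solutions
    {X : Type*} [NormedAddCommGroup X] [NormedSpace ℝ X]
    (s : Set X) (hs : IsOpen s) (a : X → X) (q b : X → ℝ)
    (m : ℕ) (χ : Fin (m + 2) → X → ℝ)
    (hχd : ∀ j, ∀ x ∈ s, DifferentiableAt ℝ (χ j) x)
    (hχeq : ∀ j, ∀ x ∈ s, fderiv ℝ (χ j) x (a x) + q x * χ j x = b x)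
    (hne : ∀ x ∈ s, χ 1 x ≠ χ 0 x)
    (f : (Fin m → ℝ) → ℝ) (hf : Differentiable ℝ f) :
    ∀ x ∈ s,
      fderiv ℝ
          (fun y => χ 0 y + (χ 1 y - χ 0 y) *
            f (fun j => (χ j.succ.succ y - χ 0 y) / (χ 1 y - χ 0 y))) x (a x)
        + q x * (χ 0 x + (χ 1 x - χ 0 x) *
            f (fun j => (χ j.succ.succ x - χ 0 x) / (χ 1 x - χ 0 x))) = b x :=
  solution_from_particular_solutions_general s a q b m χ hχd hχeq hne f hf
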